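/- arXiv:cs/0505017 — 2 statements merged into one kernel-verified Lean document; each statement's English description precedes it below -/
import Mathlib

section
/- Let S be a finite planar point set in general position with Delaunay depth function d (d(p) = 1 + graph distance in DT(S) from p to the convex hull vertices). If C is a cycle in the Delaunay triangulation all of whose vertices have depth equal to i, then every point of S lying in the open region bounded by C has depth strictly greater than i. -/
open Metric Set

noncomputable section

abbrev Pt : Type := EuclideanSpace ℝ (Fin 2)

def pt (a b : ℝ) : Pt := WithLp.toLp 2 ![a, b]

/-- General position: no 3 collinear, no 4 cocircular. -/
def GenPos (S : Set Pt) : Prop :=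
  (∀ T ⊆ S, T.ncard = 3 → ¬ Collinear ℝ T) ∧
  (∀ T ⊆ S, T.ncard = 4 → ¬ ∃ (c : Pt) (r : ℝ), ∀ p ∈ T, dist p c = r)

/-- An empty circle through `p` and `q` witnessing Delaunay adjacency. -/
def EmptyCircle (S : Set Pt) (p q : Pt) : Prop :=
  ∃ (c : Pt) (r : ℝ), dist p c = r ∧ dist q c = r ∧
    ∀ s ∈ S, s ≠ p → s ≠ q → r < dist s c

/-- The Delaunay triangulation of `S` viewed as a graph on the plane
(vertices outside `S` are isolated). -/
def DelaunayGraph (S : Set Pt) : SimpleGraph Pt where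
  Adj p q := p ≠ q ∧ p ∈ S ∧ q ∈ S ∧ EmptyCircle S p q
  symm := ⟨by
    rintro p q ⟨hne, hp, hq, c, r, h1, h2, h3⟩
    exact ⟨hne.symm, hq, hp, c, r, h2, h1, fun s hs h1' h2' => h3 s hs h2' h1'⟩⟩
  loopless := ⟨fun p h => h.1 rfl⟩

/-- `p` is a vertex of the convex hull of `S`. -/
def HullVertex (S : Set Pt) (p : Pt) : Prop :=
  p ∈ S ∧ p ∉ convexHull ℝ (S \ {p})

/-- Delaunay depth of a point of `S`: one plus the graph distance in the
Delaunay triangulation to the set of convex-hull vertices. -/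
def delaunayDepth (S : Set Pt) (p : Pt) : ℕ :=
  1 + sInf {d : ℕ | ∃ h : Pt, HullVertex S h ∧ (DelaunayGraph S).dist p h = d}

/-- Delaunay depth of a query point `p` relative to `S`: its depth in `S ∪ {p}`. -/
def relDepth (S : Set Pt) (p : Pt) : ℕ := delaunayDepth (insert p S) p

/-- The segment corresponding to an (unordered) edge. -/
def edgeSeg (e : Sym2 Pt) : Set Pt :=
  Sym2.lift ⟨fun a b => segment ℝ a b, fun a b => segment_symm ℝ a b⟩ e

/-- The closed polygonal curve drawn by a closed walk of the graph. -/
def walkCurve {G : SimpleGraph Pt} {p : Pt} (w : G.Walk p p) : Set Pt :=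
  ⋃ e ∈ w.edges, edgeSeg e

/-- `x` lies in the bounded open region enclosed by the curve. -/
def InsideCurve (curve : Set Pt) (x : Pt) : Prop :=
  x ∉ curve ∧ Bornology.IsBounded (connectedComponentIn curveᶜ x)

/-!
Empty circles make the Delaunay graph a plane graph: the radical axis of the empty circles of two
vertex-disjoint edges separates them. Hence a shortest Delaunay path from `q` to a convex-hull
vertex `h` cannot leave the bounded component of the complement of `C` without passing through a
vertex of `C`, and it must leave it, because that component lies in the convex hull of the
vertices of `C`, which does not contain `h`. The path therefore meets a vertex `c` of `C`
after at least one step, and `d(q) > d(c) = i`.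
-/

open SimpleGraph

theorem convex_setOf_dist_sq_sub_dist_sq_lt {E : Type*} [NormedAddCommGroup E]
    [InnerProductSpace ℝ E] (c₁ c₂ : E) (k : ℝ) :
    Convex ℝ {x : E | dist x c₁ ^ 2 - dist x c₂ ^ 2 < k} := by
  have hlin : IsLinearMap ℝ fun x : E => 2 * inner ℝ x (c₂ - c₁) :=
    ⟨fun x y => by simp only [inner_add_left]; ring,
      fun a x => by simp only [real_inner_smul_left, smul_eq_mul]; ring⟩
  convert convex_halfSpace_lt hlin (k - ‖c₁‖ ^ 2 + ‖c₂‖ ^ 2) using 1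
  ext x
  simp only [Set.mem_ofPred_eq, dist_eq_norm, norm_sub_sq_real, inner_sub_right]
  constructor <;> intro h <;> linarith

namespace EmptyCircle

variable {S : Set Pt} {p q a b : Pt}

theorem disjoint_segment (hpq : EmptyCircle S p q) (hab : EmptyCircle S a b)
    (hp : p ∈ S) (hq : q ∈ S) (ha : a ∈ S) (hb : b ∈ S)
    (hap : a ≠ p) (haq : a ≠ q) (hbp : b ≠ p) (hbq : b ≠ q) :
    Disjoint (segment ℝ p q) (segment ℝ a b) := by
  obtain ⟨c₁, r₁, hpc, hqc, hout₁⟩ := hpq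
  obtain ⟨c₂, r₂, hac, hbc, hout₂⟩ := hab
  have hr₁ : 0 ≤ r₁ := hpc ▸ dist_nonneg
  have hr₂ : 0 ≤ r₂ := hac ▸ dist_nonneg
  have on_first {x : Pt} (hx₁ : dist x c₁ = r₁) (hx₂ : r₂ < dist x c₂) :
      dist x c₁ ^ 2 - dist x c₂ ^ 2 < r₁ ^ 2 - r₂ ^ 2 := by
    rw [hx₁]; nlinarith
  have on_second {x : Pt} (hx₂ : dist x c₂ = r₂) (hx₁ : r₁ < dist x c₁) :
      dist x c₂ ^ 2 - dist x c₁ ^ 2 < r₂ ^ 2 - r₁ ^ 2 := by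
    rw [hx₂]; nlinarith
  have hseg₁ : segment ℝ p q ⊆ {x | dist x c₁ ^ 2 - dist x c₂ ^ 2 < r₁ ^ 2 - r₂ ^ 2} :=
    (convex_setOf_dist_sq_sub_dist_sq_lt c₁ c₂ _).segment_subset
      (on_first hpc (hout₂ p hp hap.symm hbp.symm)) (on_first hqc (hout₂ q hq haq.symm hbq.symm))
  have hseg₂ : segment ℝ a b ⊆ {x | dist x c₂ ^ 2 - dist x c₁ ^ 2 < r₂ ^ 2 - r₁ ^ 2} :=
    (convex_setOf_dist_sq_sub_dist_sq_lt c₂ c₁ _).segment_subset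
      (on_second hac (hout₁ a ha hap haq)) (on_second hbc (hout₁ b hb hbp hbq))
  refine Set.disjoint_left.mpr fun x hx₁ hx₂ => ?_
  have h₁ : dist x c₁ ^ 2 - dist x c₂ ^ 2 < r₁ ^ 2 - r₂ ^ 2 := hseg₁ hx₁
  have h₂ : dist x c₂ ^ 2 - dist x c₁ ^ 2 < r₂ ^ 2 - r₁ ^ 2 := hseg₂ hx₂
  linarith

/-- Gabriel's criterion: the circle with diameter `ab` is empty. -/
theorem of_dist_sq_lt_dist_sq_add_dist_sq
    (h : ∀ s ∈ S, s ≠ a → s ≠ b → dist a b ^ 2 < dist s a ^ 2 + dist s b ^ 2) :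
    EmptyCircle S a b := by
  refine ⟨midpoint ℝ a b, dist a b / 2, ?_, ?_, fun s hs hsa hsb => ?_⟩
  · rw [dist_left_midpoint (𝕜 := ℝ), Real.norm_two]; ring
  · rw [dist_right_midpoint (𝕜 := ℝ), Real.norm_two]; ring
  · have hApollonius :=
      EuclideanGeometry.dist_sq_add_dist_sq_eq_two_mul_dist_midpoint_sq_add_half_dist_sq s a b
    have := h s hs hsa hsb
    nlinarith [dist_nonneg (x := s) (y := midpoint ℝ a b), dist_nonneg (x := a) (y := b)]

end EmptyCircle

namespace DelaunayGraph

variable {S : Set Pt}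

theorem mem_of_mem_support {u v x : Pt} {W : (DelaunayGraph S).Walk u v} (hW : ¬ W.Nil)
    (hx : x ∈ W.support) : x ∈ S := by
  obtain ⟨e, he, hxe⟩ := (Walk.mem_support_iff_exists_mem_edges_of_not_nil hW).mp hx
  induction e using Sym2.ind with
  | _ a b =>
    have hadj : (DelaunayGraph S).Adj a b := W.adj_of_mem_edges he
    rcases Sym2.mem_iff.mp hxe with rfl | rfl
    exacts [hadj.2.1, hadj.2.2.1]

/-- A closest pair of points of `S` in different components would be a Delaunay edge. -/
theorem reachable (hfin : S.Finite) {p q : Pt} (hp : p ∈ S) (hq : q ∈ S) :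
    (DelaunayGraph S).Reachable p q := by
  by_contra hpq
  set A : Set Pt := {s ∈ S | (DelaunayGraph S).Reachable p s}
  set B : Set Pt := {s ∈ S | ¬ (DelaunayGraph S).Reachable p s}
  obtain ⟨⟨a, b⟩, ⟨haA, hbB⟩, hmin⟩ :=
    (A ×ˢ B).exists_min_image (fun z => dist z.1 z.2)
      ((hfin.subset fun s hs => hs.1).prod (hfin.subset fun s hs => hs.1))
      ⟨(p, q), ⟨hp, Reachable.refl p⟩, hq, hpq⟩
  have hab : a ≠ b := by rintro rfl; exact hbB.2 haA.2
  refine hbB.2 (haA.2.trans (Adj.reachable ⟨hab, haA.1, hbB.1, ?_⟩))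
  refine EmptyCircle.of_dist_sq_lt_dist_sq_add_dist_sq fun s hs hsa hsb => ?_
  have hsa' := dist_pos.mpr hsa
  have hsb' := dist_pos.mpr hsb
  by_cases hps : (DelaunayGraph S).Reachable p s
  · have : dist a b ≤ dist s b := hmin (s, b) ⟨⟨hs, hps⟩, hbB⟩
    nlinarith [dist_nonneg (x := a) (y := b)]
  · have : dist a b ≤ dist a s := hmin (a, s) ⟨haA, hs, hps⟩
    rw [dist_comm a s] at this
    nlinarith [dist_nonneg (x := a) (y := b)]

end DelaunayGraph

theorem exists_hullVertex {S : Set Pt} (hfin : S.Finite) (hne : S.Nonempty) :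
    ∃ h, HullVertex S h := by
  obtain ⟨x, hx⟩ := (hfin.isCompact_convexHull (𝕜 := ℝ)).extremePoints_nonempty
    hne.convexHull
  have hx' := (convex_convexHull ℝ S).mem_extremePoints_iff_mem_sdiff_convexHull_sdiff.mp hx
  exact ⟨x, extremePoints_convexHull_subset hx, fun h =>
    hx'.2 (convexHull_mono (Set.sdiff_subset_sdiff_left (subset_convexHull ℝ S)) h)⟩

theorem delaunayDepth_le {S : Set Pt} {h : Pt} (hh : HullVertex S h) (p : Pt) :
    delaunayDepth S p ≤ 1 + (DelaunayGraph S).dist p h := by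
  have hmem : (DelaunayGraph S).dist p h ∈
      {d : ℕ | ∃ h : Pt, HullVertex S h ∧ (DelaunayGraph S).dist p h = d} := ⟨h, hh, rfl⟩
  exact Nat.add_le_add_left (Nat.sInf_le hmem) 1

theorem exists_hullVertex_delaunayDepth_eq {S : Set Pt} (hfin : S.Finite) (hne : S.Nonempty)
    (p : Pt) : ∃ h, HullVertex S h ∧ delaunayDepth S p = 1 + (DelaunayGraph S).dist p h := by
  obtain ⟨h₀, hh₀⟩ := exists_hullVertex hfin hne
  have hdists : {d : ℕ | ∃ h : Pt, HullVertex S h ∧ (DelaunayGraph S).dist p h = d}.Nonempty :=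
    ⟨_, h₀, hh₀, rfl⟩
  obtain ⟨h, hh, hd⟩ := Nat.sInf_mem hdists
  exact ⟨h, hh, by rw [delaunayDepth, ← hd]⟩

theorem SimpleGraph.Walk.dist_lt_length_of_mem_support {V : Type*} {G : SimpleGraph V}
    [DecidableEq V] {u v c : V} (W : G.Walk u v) (hc : c ∈ W.support) (huc : u ≠ c) :
    G.dist c v < W.length := by
  have htake : (W.takeUntil c hc).length ≠ 0 := fun h0 => huc (Walk.eq_of_length_eq_zero h0)
  calc G.dist c v ≤ (W.dropUntil c hc).length := dist_le _
    _ < (W.takeUntil c hc).length + (W.dropUntil c hc).length := by omega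
    _ = W.length := by rw [← Walk.length_append, Walk.take_spec]

theorem not_isBounded_of_ray {E : Type*} [NormedAddCommGroup E] [NormedSpace ℝ E] {s : Set E}
    {x d : E} (hd : d ≠ 0) (hray : ∀ t : ℝ, 0 ≤ t → x + t • d ∈ s) : ¬ Bornology.IsBounded s := by
  intro hs
  obtain ⟨C, hC⟩ := isBounded_iff_forall_norm_le.mp hs
  have hd' : 0 < ‖d‖ := norm_pos_iff.mpr hd
  set t := (C + ‖x‖ + 1) / ‖d‖
  have hC0 : 0 ≤ C := (norm_nonneg x).trans (hC x (by simpa using hray 0 le_rfl))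
  have ht : 0 ≤ t := div_nonneg (by positivity) hd'.le
  have htd : ‖t • d‖ = C + ‖x‖ + 1 := by
    rw [norm_smul, Real.norm_of_nonneg ht, div_mul_cancel₀ _ hd'.ne']
  have := norm_sub_le (x + t • d) x
  rw [add_sub_cancel_left, htd] at this
  linarith [hC _ (hray t ht)]

namespace InsideCurve

variable {C : Set Pt} {x : Pt}

theorem nonempty (hx : InsideCurve C x) : C.Nonempty := by
  by_contra! hC
  have := hx.2
  rw [hC, Set.compl_empty, connectedComponentIn_univ,
    PreconnectedSpace.connectedComponent_eq_univ] at this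
  exact NormedSpace.unbounded_univ ℝ Pt this

theorem of_mem_connectedComponentIn (hx : InsideCurve C x) {y : Pt}
    (hy : y ∈ connectedComponentIn Cᶜ x) : InsideCurve C y :=
  ⟨connectedComponentIn_subset _ _ hy, connectedComponentIn_eq hy ▸ hx.2⟩

/-- Otherwise a separating open half-plane is a connected unbounded set around `x` missing `C`. -/
theorem mem_of_subset_convex (hx : InsideCurve C x) {K : Set Pt} (hKc : Convex ℝ K)
    (hKcl : IsClosed K) (hCK : C ⊆ K) : x ∈ K := by
  by_contra hxK
  obtain ⟨f, u, hfK, hfx⟩ := geometric_hahn_banach_closed_point hKc hKcl hxK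
  obtain ⟨v, hv⟩ := hx.nonempty
  have hfv := hfK v (hCK hv)
  have hH : {y | u < f y} ⊆ connectedComponentIn Cᶜ x :=
    (convex_halfSpace_gt f.isLinear u).isPreconnected.subset_connectedComponentIn hfx
      fun y hy hyC => lt_asymm (hfK y (hCK hyC)) hy
  refine not_isBounded_of_ray (x := x) (d := x - v) ?_ (fun t ht => ?_) (hx.2.subset hH)
  · rintro hxv; rw [sub_eq_zero.mp hxv] at hfx; linarith
  · show u < f (x + t • (x - v))
    simp only [map_add, map_smul, map_sub, smul_eq_mul]
    nlinarith

end InsideCurve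

section walkCurve

variable {G : SimpleGraph Pt} {v : Pt} (w : G.Walk v v)

theorem walkCurve_subset_convexHull : walkCurve w ⊆ convexHull ℝ {u | u ∈ w.support} := by
  simp only [walkCurve, Set.iUnion_subset_iff]
  intro e he
  induction e using Sym2.ind with
  | _ a b =>
    exact segment_subset_convexHull (w.fst_mem_support_of_mem_edges he)
      (w.snd_mem_support_of_mem_edges he)

theorem mem_walkCurve_of_mem_support (hw : ¬ w.Nil) {u : Pt} (hu : u ∈ w.support) :
    u ∈ walkCurve w := by
  obtain ⟨e, he, hue⟩ := (Walk.mem_support_iff_exists_mem_edges_of_not_nil hw).mp hu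
  refine Set.mem_biUnion he ?_
  induction e using Sym2.ind with
  | _ a b =>
    rcases Sym2.mem_iff.mp hue with rfl | rfl
    exacts [left_mem_segment ℝ _ _, right_mem_segment ℝ _ _]

theorem not_nil_of_insideCurve {x : Pt} (hx : InsideCurve (walkCurve w) x) : ¬ w.Nil := by
  intro hw
  obtain ⟨y, hy⟩ := hx.nonempty
  rw [Walk.eq_nil_iff_nil.mpr hw] at hy
  simp [walkCurve] at hy

theorem SimpleGraph.Walk.mem_connectedComponentIn {C : Set Pt} {x y z : Pt} (W : G.Walk x y)
    (hW : ∀ e ∈ W.edges, edgeSeg e ⊆ Cᶜ) (hx : x ∈ connectedComponentIn Cᶜ z) :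
    y ∈ connectedComponentIn Cᶜ z := by
  induction W with
  | nil => exact hx
  | @cons x' y' _ _ W ih =>
    refine ih (fun e he => hW e (by simp [he])) ?_
    rw [connectedComponentIn_eq hx]
    exact (convex_segment x' y').isPreconnected.subset_connectedComponentIn
      (left_mem_segment ℝ x' y') (hW s(x', y') (by simp)) (right_mem_segment ℝ x' y')

end walkCurve

theorem DelaunayGraph.segment_subset_compl_walkCurve {S : Set Pt} {v x y : Pt}
    (w : (DelaunayGraph S).Walk v v) (hxy : (DelaunayGraph S).Adj x y)
    (hx : x ∉ w.support) (hy : y ∉ w.support) : segment ℝ x y ⊆ (walkCurve w)ᶜ := by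
  intro z hz hzw
  obtain ⟨e, he, hze⟩ := Set.mem_iUnion₂.mp hzw
  induction e using Sym2.ind with
  | _ a b =>
    have hab : (DelaunayGraph S).Adj a b := w.adj_of_mem_edges he
    have ha := w.fst_mem_support_of_mem_edges he
    have hb := w.snd_mem_support_of_mem_edges he
    refine Set.disjoint_left.mp (hxy.2.2.2.disjoint_segment hab.2.2.2 hxy.2.1 hxy.2.2.1 hab.2.1
      hab.2.2.1 ?_ ?_ ?_ ?_) hz hze
    all_goals rintro rfl; contradiction

theorem DelaunayGraph.exists_mem_support_of_insideCurve {S : Set Pt} {v q h : Pt}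
    {w : (DelaunayGraph S).Walk v v} (hq : InsideCurve (walkCurve w) q) (hh : HullVertex S h)
    (W : (DelaunayGraph S).Walk q h) : ∃ c ∈ W.support, c ∈ w.support := by
  by_contra! hW
  have hcomp : h ∈ connectedComponentIn (walkCurve w)ᶜ q := by
    refine W.mem_connectedComponentIn (fun e he => ?_) (mem_connectedComponentIn hq.1)
    induction e using Sym2.ind with
    | _ a b =>
      exact segment_subset_compl_walkCurve w (W.adj_of_mem_edges he)
        (hW a (W.fst_mem_support_of_mem_edges he)) (hW b (W.snd_mem_support_of_mem_edges he))
  have hhull : h ∈ convexHull ℝ {u | u ∈ w.support} :=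
    (hq.of_mem_connectedComponentIn hcomp).mem_of_subset_convex (convex_convexHull ℝ _)
      (w.support.finite_toSet.isCompact_convexHull (𝕜 := ℝ)).isClosed
      (walkCurve_subset_convexHull w)
  have hsub : {u | u ∈ w.support} ⊆ S \ {h} := fun u hu =>
    ⟨mem_of_mem_support (not_nil_of_insideCurve w hq) hu,
      fun huh => hW h W.end_mem_support (Set.mem_singleton_iff.mp huh ▸ hu)⟩
  exact hh.2 (convexHull_mono hsub hhull)

theorem stmt2_general (S : Set Pt) (hfin : S.Finite) (i : ℕ)
    (v : Pt) (w : (DelaunayGraph S).Walk v v)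
    (hdepth : ∀ u ∈ w.support, delaunayDepth S u = i)
    (q : Pt) (hq : q ∈ S) (hin : InsideCurve (walkCurve w) q) :
    i < delaunayDepth S q := by
  classical
  obtain ⟨h, hh, hqh⟩ := exists_hullVertex_delaunayDepth_eq hfin ⟨q, hq⟩ q
  obtain ⟨W, hW⟩ := (DelaunayGraph.reachable hfin hq hh.1).exists_walk_length_eq_dist
  obtain ⟨c, hcW, hcw⟩ := DelaunayGraph.exists_mem_support_of_insideCurve hin hh W
  have hqc : q ≠ c := by
    rintro rfl
    exact hin.1 (mem_walkCurve_of_mem_support w (not_nil_of_insideCurve w hin) hcw)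
  have hch : (DelaunayGraph S).dist c h < (DelaunayGraph S).dist q h :=
    hW ▸ W.dist_lt_length_of_mem_support hcW hqc
  have hc := delaunayDepth_le hh c
  rw [hdepth c hcw] at hc
  omega

/-- Points of `S` inside a cycle of depth-`i` points have depth greater than `i`. -/
theorem stmt2 (S : Set Pt) (hfin : S.Finite) (hgp : GenPos S) (i : ℕ)
    (v : Pt) (w : (DelaunayGraph S).Walk v v) (hcyc : w.IsCycle)
    (hdepth : ∀ u ∈ w.support, delaunayDepth S u = i)
    (q : Pt) (hq : q ∈ S) (hin : InsideCurve (walkCurve w) q) :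
    i < delaunayDepth S q :=
  stmt2_general S hfin i v w hdepth q hq hin
end
end

section
/- Let x₁ < x₂ < ⋯ < xₙ be positive reals and S = {(±xᵢ,0),(0,±xᵢ) : 1 ≤ i ≤ n}. Then the Delaunay depth of the origin p = (0,0) in S ∪ {p} equals n + 1; that is, the graph distance in the Delaunay triangulation of S ∪ {p} from p to the convex hull vertices of S ∪ {p} is n. -/
open Metric Set

noncomputable section

/-- The element-uniqueness gadget: the four points `(±xᵢ,0), (0,±xᵢ)` for each `i`. -/
def gadget (n : ℕ) (x : Fin n → ℝ) : Set Pt :=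
  ⋃ i : Fin n, {pt (x i) 0, pt (-(x i)) 0, pt 0 (x i), pt 0 (-(x i))}

/-!
Every point of `S ∪ {0}` lies on a coordinate axis. For a centre `c`, the squared distance from `c`
to the nearest of the four axis points of norm `t` is `t² - 2 t max (|c₀|, |c₁|) + ‖c‖²`, a convex
function of `t` that bounds from below the squared distance from `c` to every axis point of norm
`t`. Hence if an empty circle passes through axis points of norms `α < β`, no `xᵢ` lies strictly
between them: along a Delaunay edge the number of `xᵢ` not exceeding the norm grows by at most one,
so the origin is at distance at least `n` from the outer layer. Conversely, consecutive points on a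
half-axis are Delaunay neighbours (the circle on their diameter is empty), and the hull vertices
are exactly the four points of the outer layer.
-/

@[simp] lemma pt_apply_zero (a b : ℝ) : pt a b 0 = a := rfl
@[simp] lemma pt_apply_one (a b : ℝ) : pt a b 1 = b := rfl

lemma pt_eta (q : Pt) : pt (q 0) (q 1) = q := by ext i; fin_cases i <;> rfl

lemma pt_zero_zero : pt 0 0 = 0 := by ext i; fin_cases i <;> rfl

lemma smul_pt (t a b : ℝ) : t • pt a b = pt (t * a) (t * b) := by ext i; fin_cases i <;> rfl

lemma inner_pt (a b c d : ℝ) : inner ℝ (pt a b) (pt c d) = a * c + b * d := by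
  simp [PiLp.inner_apply, Fin.sum_univ_two, mul_comm]

lemma norm_pt (a b : ℝ) : ‖pt a b‖ = √(a ^ 2 + b ^ 2) := by
  simp [EuclideanSpace.norm_eq, Fin.sum_univ_two]

lemma norm_pt_zero_right (a : ℝ) : ‖pt a 0‖ = |a| := by simp [norm_pt, Real.sqrt_sq_eq_abs]

lemma norm_pt_zero_left (b : ℝ) : ‖pt 0 b‖ = |b| := by simp [norm_pt, Real.sqrt_sq_eq_abs]

def cross (t : ℝ) : Set Pt := {pt t 0, pt (-t) 0, pt 0 t, pt 0 (-t)}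

def axes : Set Pt := {q | q 0 = 0 ∨ q 1 = 0}

lemma smul_mem_cross {e : Pt} (he : e ∈ cross 1) (t : ℝ) : t • e ∈ cross t := by
  rcases he with rfl | rfl | rfl | rfl <;> simp [cross, smul_pt]

lemma norm_of_mem_cross {t : ℝ} {q : Pt} (hq : q ∈ cross t) : ‖q‖ = |t| := by
  rcases hq with rfl | rfl | rfl | rfl <;> simp [norm_pt_zero_left, norm_pt_zero_right]

lemma cross_neg (t : ℝ) : cross (-t) = cross t := by
  ext q; simp only [cross, neg_neg, mem_insert_iff, mem_singleton_iff]; tauto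

lemma norm_smul_of_mem_cross_one {e : Pt} (he : e ∈ cross 1) (t : ℝ) : ‖t • e‖ = |t| :=
  norm_of_mem_cross (smul_mem_cross he t)

lemma cross_subset_axes (t : ℝ) : cross t ⊆ axes := by
  rintro q (rfl | rfl | rfl | rfl) <;> simp [axes]

lemma exists_mem_cross_one_eq_norm_smul {q : Pt} (hq : q ∈ axes) :
    ∃ e ∈ cross 1, q = ‖q‖ • e := by
  rcases hq with h | h <;> rw [← pt_eta q, h]
  · rw [norm_pt_zero_left]
    rcases abs_choice (q 1) with h1 | h1 <;> rw [h1]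
    · exact ⟨pt 0 1, by simp [cross], by rw [smul_pt]; simp⟩
    · exact ⟨pt 0 (-1), by simp [cross], by rw [smul_pt]; simp⟩
  · rw [norm_pt_zero_right]
    rcases abs_choice (q 0) with h0 | h0 <;> rw [h0]
    · exact ⟨pt 1 0, by simp [cross], by rw [smul_pt]; simp⟩
    · exact ⟨pt (-1) 0, by simp [cross], by rw [smul_pt]; simp⟩

lemma inner_le_max_abs {e : Pt} (he : e ∈ cross 1) (c : Pt) :
    inner ℝ e c ≤ max |c 0| |c 1| := by
  rw [← pt_eta c]
  rcases he with rfl | rfl | rfl | rfl <;> simp only [inner_pt, pt_apply_zero, pt_apply_one] <;>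
    linarith [le_abs_self (c 0), neg_le_abs (c 0), le_abs_self (c 1), neg_le_abs (c 1),
      le_max_left |c 0| |c 1|, le_max_right |c 0| |c 1|]

lemma exists_mem_cross_one_inner_eq_max_abs (c : Pt) :
    ∃ e ∈ cross 1, inner ℝ e c = max |c 0| |c 1| := by
  rw [← pt_eta c]
  simp only [pt_apply_zero, pt_apply_one]
  rcases le_total |c 1| |c 0| with h | h
  · rw [max_eq_left h]
    rcases abs_choice (c 0) with h0 | h0
    · exact ⟨pt 1 0, by simp [cross], by simp [inner_pt, h0]⟩
    · exact ⟨pt (-1) 0, by simp [cross], by simp [inner_pt, h0]⟩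
  · rw [max_eq_right h]
    rcases abs_choice (c 1) with h1 | h1
    · exact ⟨pt 0 1, by simp [cross], by simp [inner_pt, h1]⟩
    · exact ⟨pt 0 (-1), by simp [cross], by simp [inner_pt, h1]⟩

lemma inner_nonpos_of_ne {e e' : Pt} (he : e ∈ cross 1) (he' : e' ∈ cross 1) (hne : e ≠ e') :
    inner ℝ e e' ≤ 0 := by
  rcases he with rfl | rfl | rfl | rfl <;> rcases he' with rfl | rfl | rfl | rfl <;>
    simp_all [inner_pt]

lemma le_sq_dist_of_mem_axes {q : Pt} (hq : q ∈ axes) (c : Pt) :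
    ‖q‖ ^ 2 - 2 * ‖q‖ * max |c 0| |c 1| + ‖c‖ ^ 2 ≤ dist q c ^ 2 := by
  obtain ⟨e, he, hqe⟩ := exists_mem_cross_one_eq_norm_smul hq
  have hinner : inner ℝ q c ≤ ‖q‖ * max |c 0| |c 1| := calc
    inner ℝ q c = ‖q‖ * inner ℝ e c := by conv_lhs => rw [hqe, real_inner_smul_left]
    _ ≤ ‖q‖ * max |c 0| |c 1| :=
      mul_le_mul_of_nonneg_left (inner_le_max_abs he c) (norm_nonneg q)
  rw [dist_eq_norm, norm_sub_sq_real]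
  linarith

lemma exists_mem_cross_sq_dist_eq (t : ℝ) (c : Pt) :
    ∃ p ∈ cross t, dist p c ^ 2 = t ^ 2 - 2 * t * max |c 0| |c 1| + ‖c‖ ^ 2 := by
  obtain ⟨e, he, hec⟩ := exists_mem_cross_one_inner_eq_max_abs c
  refine ⟨t • e, smul_mem_cross he t, ?_⟩
  rw [dist_eq_norm, norm_sub_sq_real, real_inner_smul_left, hec, norm_smul_of_mem_cross_one he,
    sq_abs]
  ring

lemma exists_mem_cross_dist_le {a b c : Pt} {r t : ℝ} (ha : a ∈ axes) (hb : b ∈ axes)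
    (hac : dist a c = r) (hbc : dist b c = r) (hat : ‖a‖ ≤ t) (htb : t ≤ ‖b‖) :
    ∃ p ∈ cross t, dist p c ≤ r := by
  obtain ⟨p, hp, hpc⟩ := exists_mem_cross_sq_dist_eq t c
  refine ⟨p, hp, ?_⟩
  have hr : 0 ≤ r := hac ▸ dist_nonneg
  have hra := le_sq_dist_of_mem_axes ha c
  have hrb := le_sq_dist_of_mem_axes hb c
  rw [hac] at hra
  rw [hbc] at hrb
  set φ : ℝ → ℝ := fun u => u ^ 2 - 2 * u * max |c 0| |c 1| + ‖c‖ ^ 2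
  -- `φ` is convex, so on `[‖a‖, ‖b‖]` it stays below its values at the ends
  have hsq : dist p c ^ 2 ≤ r ^ 2 := by
    rw [hpc]
    rcases hat.eq_or_lt with rfl | hat'
    · exact hra
    have hconv : (‖b‖ - ‖a‖) * (φ t - r ^ 2) =
        (‖b‖ - t) * (φ ‖a‖ - r ^ 2) + (t - ‖a‖) * (φ ‖b‖ - r ^ 2)
          - (‖b‖ - ‖a‖) * (t - ‖a‖) * (‖b‖ - t) := by
      simp only [φ]; ring
    have : (‖b‖ - ‖a‖) * (φ t - r ^ 2) ≤ 0 := by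
      rw [hconv]
      nlinarith [mul_nonneg (sub_nonneg.2 htb) (sub_nonneg.2 hra),
        mul_nonneg (sub_nonneg.2 hat) (sub_nonneg.2 hrb),
        mul_nonneg (mul_nonneg (sub_nonneg.2 (hat.trans htb)) (sub_nonneg.2 hat))
          (sub_nonneg.2 htb)]
    have := nonpos_of_mul_nonpos_right this (by linarith)
    linarith
  exact (pow_le_pow_iff_left₀ dist_nonneg hr two_ne_zero).1 hsq

open scoped Finset

lemma Finset.card_filter_le_le_card_filter_le_add_one {α : Type*} [LinearOrder α] (T : Finset α)
    {s v : α} (hgap : ∀ t ∈ T, t ≤ s ∨ v ≤ t) : #{t ∈ T | t ≤ v} ≤ #{t ∈ T | t ≤ s} + 1 :=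
  calc #{t ∈ T | t ≤ v} ≤ #(insert v {t ∈ T | t ≤ s}) := by
        refine Finset.card_le_card fun t ht => ?_
        obtain ⟨htT, htv⟩ := Finset.mem_filter.1 ht
        rcases hgap t htT with h | h
        · exact Finset.mem_insert_of_mem (Finset.mem_filter.2 ⟨htT, h⟩)
        · rw [le_antisymm htv h]
          exact Finset.mem_insert_self _ _
    _ ≤ _ := Finset.card_insert_le _ _

def level (T : Finset ℝ) (q : Pt) : ℕ := #{t ∈ T | t ≤ ‖q‖}

lemma level_le_level_add_one_of_adj {S : Set Pt} {T : Finset ℝ} (hS : S ⊆ axes)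
    (hT : ∀ t ∈ T, cross t ⊆ S) {a b : Pt} (hab : (DelaunayGraph S).Adj a b) :
    level T b ≤ level T a + 1 := by
  obtain ⟨-, ha, hb, c, r, hac, hbc, hempty⟩ := hab
  by_contra! hlt
  obtain ⟨t, htT, hat, htb⟩ : ∃ t ∈ T, ‖a‖ < t ∧ t < ‖b‖ := by
    by_contra! h
    exact hlt.not_ge <| T.card_filter_le_le_card_filter_le_add_one
      fun t ht => (le_or_gt t ‖a‖).imp_right (h t ht)
  obtain ⟨p, hp, hpc⟩ := exists_mem_cross_dist_le (hS ha) (hS hb) hac hbc hat.le htb.le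
  have hpt : ‖p‖ = t := (norm_of_mem_cross hp).trans (abs_of_pos ((norm_nonneg a).trans_lt hat))
  exact hpc.not_gt (hempty p (hT t htT hp) (by rintro rfl; linarith) (by rintro rfl; linarith))

lemma adj_smul_smul {S : Set Pt} (hS : S ⊆ axes) {e : Pt} (he : e ∈ cross 1) {s t : ℝ}
    (hs : 0 ≤ s) (hst : s < t) (hsS : s • e ∈ S) (htS : t • e ∈ S)
    (hgap : ∀ q ∈ S, ‖q‖ ≤ s ∨ t ≤ ‖q‖) : (DelaunayGraph S).Adj (s • e) (t • e) := by
  have he1 : ‖e‖ = 1 := by simpa using norm_smul_of_mem_cross_one he 1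
  have hdist (u v : ℝ) : dist (u • e) (v • e) = |u - v| := by
    rw [dist_eq_norm, ← sub_smul, norm_smul_of_mem_cross_one he]
  have he0 : e ≠ 0 := norm_ne_zero_iff.1 (he1 ▸ one_ne_zero)
  refine ⟨(smul_left_injective ℝ he0).ne hst.ne, hsS, htS, ((s + t) / 2) • e, (t - s) / 2, ?_, ?_,
    fun q hq hqs hqt => ?_⟩
  · rw [hdist, abs_of_nonpos (by linarith)]; ring
  · rw [hdist, abs_of_nonneg (by linarith)]; ring
  obtain ⟨e', he', hqe⟩ := exists_mem_cross_one_eq_norm_smul (hS hq)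
  rcases eq_or_ne e' e with rfl | hne
  · have hs' : ‖q‖ ≠ s := fun h => hqs (by rw [hqe, h])
    have ht' : ‖q‖ ≠ t := fun h => hqt (by rw [hqe, h])
    rw [hqe, hdist, lt_abs]
    rcases hgap q hq with h | h
    · exact Or.inr (by linarith [lt_of_le_of_ne h hs'])
    · exact Or.inl (by linarith [lt_of_le_of_ne h ht'.symm])
  · have hinner : inner ℝ q e ≤ 0 := by
      rw [hqe, real_inner_smul_left]
      exact mul_nonpos_of_nonneg_of_nonpos (norm_nonneg q) (inner_nonpos_of_ne he' he hne)
    have hq_or_s : 0 < ‖q‖ ∨ 0 < s := by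
      by_contra! h
      have hq0 : q = 0 := norm_le_zero_iff.1 h.1
      exact hqs (by rw [hq0, le_antisymm h.2 hs, zero_smul])
    have hsq : ((t - s) / 2) ^ 2 < dist q (((s + t) / 2) • e) ^ 2 := by
      rw [dist_eq_norm, norm_sub_sq_real, real_inner_smul_right, norm_smul, he1,
        Real.norm_eq_abs, mul_one, sq_abs]
      rcases hq_or_s with h | h <;> nlinarith [mul_nonneg hs (hs.trans hst.le)]
    exact (pow_lt_pow_iff_left₀ (by linarith) dist_nonneg two_ne_zero).1 hsq

lemma SimpleGraph.Reachable.le_add_dist {V : Type*} {G : SimpleGraph V} {f : V → ℕ}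
    (hf : ∀ u v, G.Adj u v → f v ≤ f u + 1) {u v : V} (huv : G.Reachable u v) :
    f v ≤ f u + G.dist u v := by
  obtain ⟨w, hw⟩ := huv.exists_walk_length_eq_dist
  rw [← hw]
  clear hw huv
  induction w with
  | nil => simp
  | @cons _ _ _ h _ ih => rw [SimpleGraph.Walk.length_cons]; have := hf _ _ h; omega

lemma SimpleGraph.Adj.dist_le_dist_add_one {V : Type*} {G : SimpleGraph V} {v w : V}
    (hvw : G.Adj v w) (u : V) : G.dist u w ≤ G.dist u v + 1 :=
  (hvw.reachable.dist_triangle_right u).trans_eq (by rw [SimpleGraph.dist_eq_one_iff_adj.2 hvw])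

lemma not_hullVertex_smul {S : Set Pt} {e : Pt} (he : e ∈ cross 1) {w X : ℝ} (hwX : |w| < X)
    (hX : X • e ∈ S) (hX' : (-X) • e ∈ S) : ¬ HullVertex S (w • e) := by
  rintro ⟨-, hnot⟩
  have hne (u : ℝ) (hu : |u| = X) : u • e ∉ ({w • e} : Set Pt) := fun h => by
    have := congrArg norm (mem_singleton_iff.1 h)
    rw [norm_smul_of_mem_cross_one he, norm_smul_of_mem_cross_one he] at this
    linarith
  have hseg : w • e ∈ segment ℝ ((-X) • e) (X • e) := by
    have := image_segment ℝ (LinearMap.toSpanSingleton ℝ Pt e).toAffineMap (-X) X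
    rw [segment_eq_Icc (by linarith [abs_nonneg w])] at this
    exact this ▸ mem_image_of_mem _ (abs_le.1 hwX.le)
  have hX0 : 0 < X := (abs_nonneg w).trans_lt hwX
  exact hnot <| segment_subset_convexHull (s := S \ {w • e})
    ⟨hX', hne _ (by rw [abs_neg, abs_of_pos hX0])⟩ ⟨hX, hne _ (abs_of_pos hX0)⟩ hseg

lemma hullVertex_of_forall_apply_zero_lt {S : Set Pt} {h : Pt} (hh : h ∈ S)
    (hlt : ∀ q ∈ S, q ≠ h → q 0 < h 0) : HullVertex S h := by
  refine ⟨hh, fun hmem => lt_irrefl (h 0) ?_⟩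
  exact convexHull_min (fun q hq => hlt q hq.1 hq.2)
    (convex_halfSpace_lt (f := fun z : Pt => z 0) ⟨fun _ _ => rfl, fun _ _ => rfl⟩ (h 0)) hmem

lemma delaunayDepth_eq_of_forall_hullVertex {S : Set Pt} {p h₀ : Pt} {d : ℕ}
    (h₀_hull : HullVertex S h₀) (hd : ∀ h, HullVertex S h → (DelaunayGraph S).dist p h = d) :
    delaunayDepth S p = d + 1 := by
  have : {d' : ℕ | ∃ h, HullVertex S h ∧ (DelaunayGraph S).dist p h = d'} = {d} := by
    ext d'
    constructor
    · rintro ⟨h, hh, rfl⟩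
      exact hd h hh
    · rintro rfl
      exact ⟨h₀, h₀_hull, hd h₀ h₀_hull⟩
  rw [delaunayDepth, this, csInf_singleton, add_comm]

section Gadget

variable {n : ℕ} {x : Fin n → ℝ}

lemma gadget_eq_iUnion_cross : gadget n x = ⋃ i, cross (x i) := rfl

lemma cross_subset_insert_gadget (i : Fin n) : cross (x i) ⊆ insert (pt 0 0) (gadget n x) :=
  (subset_iUnion (fun i => cross (x i)) i).trans (subset_insert _ _)

lemma insert_gadget_subset_axes : insert (pt 0 0) (gadget n x) ⊆ axes :=
  insert_subset (by simp [axes]) (iUnion_subset fun i => cross_subset_axes (x i))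

lemma norm_eq_of_mem_insert_gadget (hpos : ∀ i, 0 < x i) {q : Pt}
    (hq : q ∈ insert (pt 0 0) (gadget n x)) : ‖q‖ = 0 ∨ ∃ i, ‖q‖ = x i := by
  rcases hq with rfl | hq
  · exact Or.inl (by rw [pt_zero_zero, norm_zero])
  · obtain ⟨i, hi⟩ := mem_iUnion.1 (gadget_eq_iUnion_cross ▸ hq)
    exact Or.inr ⟨i, (norm_of_mem_cross hi).trans (abs_of_pos (hpos i))⟩

lemma norm_le_or_le_of_mem_insert_gadget (hpos : ∀ i, 0 < x i) {s t : ℝ} (hs : 0 ≤ s)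
    (hgap : ∀ i, x i ≤ s ∨ t ≤ x i) {q : Pt} (hq : q ∈ insert (pt 0 0) (gadget n x)) :
    ‖q‖ ≤ s ∨ t ≤ ‖q‖ := by
  rcases norm_eq_of_mem_insert_gadget hpos hq with h | ⟨i, h⟩
  · exact Or.inl (h ▸ hs)
  · exact h ▸ hgap i

end Gadget

section GadgetSucc

variable {m : ℕ} {x : Fin (m + 1) → ℝ}

lemma norm_le_last_of_mem_insert_gadget (hpos : ∀ i, 0 < x i) (hmono : StrictMono x) {q : Pt}
    (hq : q ∈ insert (pt 0 0) (gadget (m + 1) x)) : ‖q‖ ≤ x (Fin.last m) := by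
  rcases norm_eq_of_mem_insert_gadget hpos hq with h | ⟨i, h⟩
  · exact h ▸ (hpos _).le
  · exact h ▸ hmono.monotone (Fin.le_last i)

lemma reachable_smul_and_dist_le (hpos : ∀ i, 0 < x i) (hmono : StrictMono x) {e : Pt}
    (he : e ∈ cross 1) (i : Fin (m + 1)) :
    (DelaunayGraph (insert (pt 0 0) (gadget (m + 1) x))).Reachable (pt 0 0) (x i • e) ∧
      (DelaunayGraph (insert (pt 0 0) (gadget (m + 1) x))).dist (pt 0 0) (x i • e) ≤ i + 1 := by
  have hmem (i : Fin (m + 1)) : x i • e ∈ insert (pt 0 0) (gadget (m + 1) x) :=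
    cross_subset_insert_gadget i (smul_mem_cross he _)
  have hadj {s : ℝ} (hs : 0 ≤ s) (hsS : s • e ∈ insert (pt 0 0) (gadget (m + 1) x))
      (i : Fin (m + 1)) (hsi : s < x i) (hgap : ∀ k, x k ≤ s ∨ x i ≤ x k) :
      (DelaunayGraph (insert (pt 0 0) (gadget (m + 1) x))).Adj (s • e) (x i • e) :=
    adj_smul_smul insert_gadget_subset_axes he hs hsi hsS (hmem i)
      fun _ hq => norm_le_or_le_of_mem_insert_gadget hpos hs hgap hq
  induction i using Fin.induction with
  | zero =>
    have h0 := hadj le_rfl (by simp [pt_zero_zero]) 0 (hpos 0)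
      fun k => Or.inr (hmono.monotone (Fin.zero_le k))
    rw [zero_smul, ← pt_zero_zero] at h0
    exact ⟨h0.reachable, by simp [SimpleGraph.dist_eq_one_iff_adj.2 h0]⟩
  | succ i ih =>
    have hgap (k : Fin (m + 1)) : x k ≤ x i.castSucc ∨ x i.succ ≤ x k :=
      (le_or_gt k i.castSucc).imp (hmono.monotone ·) fun h =>
        hmono.monotone (Fin.castSucc_lt_iff_succ_le.1 h)
    have hstep := hadj (hpos _).le (hmem _) i.succ (hmono i.castSucc_lt_succ) hgap
    refine ⟨ih.1.trans hstep.reachable, (hstep.dist_le_dist_add_one _).trans ?_⟩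
    simp only [Fin.val_succ, Fin.val_castSucc] at ih ⊢
    omega

lemma dist_origin_smul_last (hpos : ∀ i, 0 < x i) (hmono : StrictMono x) {e : Pt}
    (he : e ∈ cross 1) :
    (DelaunayGraph (insert (pt 0 0) (gadget (m + 1) x))).dist (pt 0 0) (x (Fin.last m) • e)
      = m + 1 := by
  obtain ⟨hreach, hle⟩ := reachable_smul_and_dist_le hpos hmono he (Fin.last m)
  set T := Finset.univ.image x
  have hT (t : ℝ) (ht : t ∈ T) : cross t ⊆ insert (pt 0 0) (gadget (m + 1) x) := by
    obtain ⟨i, -, rfl⟩ := Finset.mem_image.1 ht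
    exact cross_subset_insert_gadget i
  have hlevel := hreach.le_add_dist (f := level T) fun _ _ hab =>
    level_le_level_add_one_of_adj insert_gadget_subset_axes hT hab
  have h0 : level T (pt 0 0) = 0 := by
    simp [level, T, pt_zero_zero, hpos]
  have hX : level T (x (Fin.last m) • e) = m + 1 := by
    rw [level, norm_smul_of_mem_cross_one he, abs_of_pos (hpos _), Finset.filter_true_of_mem,
      Finset.card_image_of_injective _ hmono.injective, Finset.card_univ, Fintype.card_fin]
    intro t ht
    obtain ⟨i, -, rfl⟩ := Finset.mem_image.1 ht
    exact hmono.monotone (Fin.le_last i)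
  simp only [Fin.val_last] at hle
  omega

lemma hullVertex_pt_last (hpos : ∀ i, 0 < x i) (hmono : StrictMono x) :
    HullVertex (insert (pt 0 0) (gadget (m + 1) x)) (pt (x (Fin.last m)) 0) := by
  refine hullVertex_of_forall_apply_zero_lt
    (cross_subset_insert_gadget (Fin.last m) (by simp [cross]))
    fun q hq hne => ?_
  rw [pt_apply_zero]
  rcases insert_gadget_subset_axes hq with h | h
  · exact h ▸ hpos _
  · have hnorm : ‖q‖ = |q 0| := by rw [← pt_eta q, h, norm_pt_zero_right, pt_apply_zero]
    have hle := norm_le_last_of_mem_insert_gadget hpos hmono hq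
    refine lt_of_le_of_ne ((le_abs_self _).trans (hnorm ▸ hle)) fun h0 => hne ?_
    rw [← pt_eta q, h, h0]

lemma exists_eq_last_smul_of_hullVertex (hpos : ∀ i, 0 < x i) (hmono : StrictMono x) {h : Pt}
    (hh : HullVertex (insert (pt 0 0) (gadget (m + 1) x)) h) :
    ∃ e ∈ cross 1, h = x (Fin.last m) • e := by
  obtain ⟨e, he, hhe⟩ := exists_mem_cross_one_eq_norm_smul (insert_gadget_subset_axes hh.1)
  refine ⟨e, he, ?_⟩
  rcases (norm_le_last_of_mem_insert_gadget hpos hmono hh.1).lt_or_eq with hlt | heq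
  · have := not_hullVertex_smul he (w := ‖h‖) (by rwa [abs_norm])
      (cross_subset_insert_gadget _ (smul_mem_cross he _))
      (cross_subset_insert_gadget _ (cross_neg (x _) ▸ smul_mem_cross he _))
    rw [← hhe] at this
    exact absurd hh this
  · rw [hhe, heq]

end GadgetSucc

/-- For distinct positive `x₁ < ⋯ < xₙ`, the Delaunay depth of the origin in
`S ∪ {0}` is `n + 1`. -/
theorem stmt7 (n : ℕ) (x : Fin n → ℝ) (hpos : ∀ i, 0 < x i)
    (hmono : StrictMono x) :
    delaunayDepth (insert (pt 0 0) (gadget n x)) (pt 0 0) = n + 1 := by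
  cases n with
  | zero =>
    have hS : insert (pt 0 0) (gadget 0 x) = {pt 0 0} := by simp [gadget]
    rw [hS]
    exact delaunayDepth_eq_of_forall_hullVertex (h₀ := pt 0 0) ⟨rfl, by simp⟩
      fun h hh => by rw [mem_singleton_iff.1 hh.1, SimpleGraph.dist_self]
  | succ m =>
    refine delaunayDepth_eq_of_forall_hullVertex (hullVertex_pt_last hpos hmono) fun h hh => ?_
    obtain ⟨e, he, rfl⟩ := exists_eq_last_smul_of_hullVertex hpos hmono hh
    exact dist_origin_smul_last hpos hmono he
end
end
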